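/- arXiv:2201.04174 — 4 statements merged into one kernel-verified Lean document; each statement's English description precedes it below -/
import Mathlib

section
/- Let (a_n)_{n≥0} be a summable sequence of non-negative real numbers with sum S = ∑_{n=0}^∞ a_n. Suppose there exist a real number c > 1 and an integer l ≥ 1 such that for every k ∈ ℕ one has ∑_{n=k}^∞ a_n ≤ c · ∑_{j=k}^{k+l−1} a_j. Then for every k ∈ ℕ, a_k ≤ (1 + 1/c)^{−⌊k/l⌋} · S, where ⌊k/l⌋ denotes integer division of k by l. -/
/-- **Lemma (decay of a summable sequence).**
Let `(a_n)` be a summable sequence of non-negative reals with sum `S = ∑' n, a n`.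
If there are `c > 1` and `l ≥ 1` such that for every `k` the tail `∑_{n ≥ k} a_n` is bounded
by `c` times the block sum `∑_{j=k}^{k+l-1} a_j`, then `a k ≤ (1 + 1/c) ^ (-⌊k/l⌋) * S`
for all `k`, where `⌊k/l⌋` is the integer division of `k` by `l`. -/
theorem tail_block_bound_implies_exponential_decay
    (a : ℕ → ℝ) (ha : ∀ n, 0 ≤ a n) (hsum : Summable a)
    (c : ℝ) (hc : 1 < c) (l : ℕ) (hl : 1 ≤ l)
    (h : ∀ k : ℕ, (∑' n : ℕ, a (k + n)) ≤ c * ∑ j ∈ Finset.Ico k (k + l), a j) :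
    ∀ k : ℕ, a k ≤ (1 + 1 / c) ^ (-((k / l : ℕ) : ℤ)) * ∑' n, a n := by
  have hc0 : (0:ℝ) < c := lt_trans one_pos hc
  set T : ℕ → ℝ := fun k => ∑' n : ℕ, a (k + n) with hT
  have hsumk : ∀ k, Summable (fun n => a (k + n)) := fun k => by
    simpa [add_comm] using (summable_nat_add_iff k).2 hsum
  have hTnonneg : ∀ k, 0 ≤ T k := fun k => tsum_nonneg (fun n => ha _)
  -- T k = block + T (k+l)
  have hsplit : ∀ k, T k = (∑ j ∈ Finset.Ico k (k + l), a j) + T (k + l) := by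
    intro k
    have h2 := (Summable.sum_add_tsum_nat_add l (hsumk k)).symm
    rw [hT]
    simp only []
    rw [h2]
    congr 1
    · rw [Finset.sum_Ico_eq_sum_range]
      simp
    · exact tsum_congr fun n => by ring_nf
  -- T antitone
  have hTsucc : ∀ k, T (k+1) ≤ T k := by
    intro k
    have h2 : T k = a k + T (k+1) := by
      have := Summable.tsum_eq_zero_add (hsumk k)
      rw [hT]; simp only []
      rw [this]
      congr 1
      exact tsum_congr fun n => by ring_nf
    nlinarith [ha k]
  have hTanti : ∀ k m, k ≤ m → T m ≤ T k :=
    fun k m hkm => antitone_nat_of_succ_le hTsucc hkm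
  -- contraction step
  have hstep : ∀ k, T (k + l) ≤ (1 - 1/c) * T k := by
    intro k
    have hb := h k
    have hs := hsplit k
    have hBnn : 0 ≤ ∑ j ∈ Finset.Ico k (k + l), a j :=
      Finset.sum_nonneg fun j _ => ha j
    have hB : T k / c ≤ ∑ j ∈ Finset.Ico k (k + l), a j := by
      rw [div_le_iff₀ hc0]; linarith [hb]
    have : T (k + l) = T k - ∑ j ∈ Finset.Ico k (k + l), a j := by linarith
    rw [this]
    have : T k - ∑ j ∈ Finset.Ico k (k + l), a j ≤ T k - T k / c := by linarith
    calc T k - ∑ j ∈ Finset.Ico k (k + l), a j ≤ T k - T k / c := this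
      _ = (1 - 1/c) * T k := by ring
  have hq : (0:ℝ) < 1 + 1/c := by positivity
  have hcontr : (1 - 1/c) ≤ (1 + 1/c)⁻¹ := by
    rw [inv_eq_one_div, le_div_iff₀ hq]
    have h1c : 1/c < 1 := by rw [div_lt_one hc0]; exact hc
    nlinarith [one_div_pos.2 hc0]
  -- T (l*m) ≤ (1+1/c)^(-m) * T 0
  have hgeo : ∀ m : ℕ, T (l * m) ≤ ((1 + 1/c)⁻¹) ^ m * T 0 := by
    intro m
    induction m with
    | zero => simp
    | succ n ih =>
      have h1 : T (l * (n+1)) ≤ (1 - 1/c) * T (l * n) := by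
        have := hstep (l * n)
        have heq : l * n + l = l * (n+1) := by ring
        rwa [heq] at this
      have h2 : (1 - 1/c) * T (l * n) ≤ (1 + 1/c)⁻¹ * T (l * n) :=
        mul_le_mul_of_nonneg_right hcontr (hTnonneg _)
      have h3 : (1 + 1/c)⁻¹ * T (l * n) ≤ (1 + 1/c)⁻¹ * (((1 + 1/c)⁻¹) ^ n * T 0) :=
        mul_le_mul_of_nonneg_left ih (by positivity)
      calc T (l * (n+1)) ≤ (1 - 1/c) * T (l * n) := h1
        _ ≤ (1 + 1/c)⁻¹ * T (l * n) := h2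
        _ ≤ (1 + 1/c)⁻¹ * (((1 + 1/c)⁻¹) ^ n * T 0) := h3
        _ = ((1 + 1/c)⁻¹) ^ (n+1) * T 0 := by ring
  intro k
  have hk1 : a k ≤ T k := by
    have := Summable.le_tsum (hsumk k) 0 (fun i _ => ha _)
    simpa using this
  have hk2 : T k ≤ T (l * (k / l)) := hTanti _ _ (Nat.mul_div_le k l)
  have hk3 := hgeo (k / l)
  have hT0 : T 0 = ∑' n, a n := by rw [hT]; simp
  have hz : (1 + 1/c) ^ (-((k / l : ℕ) : ℤ)) = ((1 + 1/c)⁻¹) ^ (k / l) := by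
    rw [zpow_neg, zpow_natCast, inv_pow]
  rw [hz, ← hT0]
  calc a k ≤ T k := hk1
    _ ≤ T (l * (k / l)) := hk2
    _ ≤ ((1 + 1/c)⁻¹) ^ (k / l) * T 0 := hk3
end

section
/- Let E ⊆ 𝕋^N be a nonempty open set with μ(E) = m > 0 and μ(closure(E)) = μ(E). Let (δ_n) be a sequence of positive reals with δ_n → 0, and let (E_n) be a sequence of measurable subsets of 𝕋^N with μ(E_n) = m and closure(E_n) ⊆ (E)_{δ_n} for every n. Then the Hausdorff distance d_H(closure(E_n), closure(E)) tends to 0 as n → ∞. -/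
open MeasureTheory

noncomputable section

/-- The integer lattice `ℤ^N` inside Euclidean space `ℝ^N`. -/
abbrev torusLattice (N : ℕ) : AddSubgroup (EuclideanSpace ℝ (Fin N)) :=
  (Submodule.span ℤ (Set.range ((EuclideanSpace.basisFun (Fin N) ℝ).toBasis))).toAddSubgroup

instance (N : ℕ) : IsClosed ((torusLattice N : Set (EuclideanSpace ℝ (Fin N)))) :=
  AddSubgroup.isClosed_of_discrete

/-- The flat torus `𝕋^N = ℝ^N / ℤ^N`, equipped with the quotient metric
`dist x̄ ȳ = min_{z ∈ ℤ^N} |x - y + z|` coming from the quotient norm. -/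
abbrev Torus (N : ℕ) := EuclideanSpace ℝ (Fin N) ⧸ torusLattice N

/-- The canonical quotient map `ℝ^N → 𝕋^N`. -/
abbrev torusQuot (N : ℕ) : EuclideanSpace ℝ (Fin N) → Torus N := QuotientAddGroup.mk

/-- The Haar probability measure on the flat torus, defined as the push-forward of the
Lebesgue measure on the fundamental domain `[0,1)^N`. -/
def torusMeasure (N : ℕ) : Measure (Torus N) :=
  Measure.map (torusQuot N)
    (volume.restrict {x : EuclideanSpace ℝ (Fin N) | ∀ i, x i ∈ Set.Ico (0 : ℝ) 1})

/-! If `E n` missed a ball `B(y, r)` around a point `y ∈ closure E`, then `E n` and the open set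
`E ∩ B(y, r)`, of positive measure, would be disjoint subsets of the `δ n`-neighbourhood of `E`.
That neighbourhood has measure tending to `μ (closure E) = μ E ≤ μ (E n)`, so eventually `E n`
meets every such ball, uniformly in `y` by compactness of `closure E`. The other half of the
Hausdorff distance is at most `δ n` by hypothesis. -/

open Metric Filter Topology Set
open scoped ENNReal Pointwise

lemma eventually_nonempty_inter_of_tendsto_measure {X ι : Type*} [MeasurableSpace X]
    {μ : Measure X} {l : Filter ι} {A F : ι → Set X} {V : Set X} {a : ℝ≥0∞}
    (hF : Tendsto (fun i => μ (F i)) l (𝓝 a)) (ha : a ≠ ∞) (hA : ∀ i, a ≤ μ (A i))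
    (hAF : ∀ i, A i ⊆ F i) (hVF : ∀ i, V ⊆ F i) (hV : MeasurableSet V) (hV₀ : μ V ≠ 0) :
    ∀ᶠ i in l, (A i ∩ V).Nonempty := by
  filter_upwards [hF.eventually_lt_const (ENNReal.lt_add_right ha hV₀)] with i hi
  by_contra hAV
  rw [not_nonempty_iff_eq_empty, ← disjoint_iff_inter_eq_empty] at hAV
  refine hi.not_ge ?_
  calc a + μ V ≤ μ (A i) + μ V := by gcongr; exact hA i
    _ = μ (A i ∪ V) := (measure_union hAV hV).symm
    _ ≤ μ (F i) := measure_mono (union_subset (hAF i) (hVF i))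

lemma IsCompact.eventually_forall_exists_dist_lt {X ι : Type*} [PseudoMetricSpace X]
    {l : Filter ι} {K : Set X} (hK : IsCompact K) {A : ι → Set X}
    (hA : ∀ y ∈ K, ∀ r > 0, ∀ᶠ i in l, (A i ∩ ball y r).Nonempty) {ε : ℝ} (hε : 0 < ε) :
    ∀ᶠ i in l, ∀ y ∈ K, ∃ x ∈ A i, dist y x < ε := by
  obtain ⟨t, htK, hKt⟩ :=
    hK.elim_nhds_subcover (fun y => ball y (ε / 2)) fun y _ => ball_mem_nhds y (half_pos hε)
  have hmeet : ∀ᶠ i in l, ∀ z ∈ t, (A i ∩ ball z (ε / 2)).Nonempty :=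
    (eventually_all_finset t).2 fun z hz => hA z (htK z hz) _ (half_pos hε)
  filter_upwards [hmeet] with i hi y hy
  obtain ⟨z, hz, hyz⟩ := mem_iUnion₂.1 (hKt hy)
  obtain ⟨x, hxA, hxz⟩ := hi z hz
  exact ⟨x, hxA, by linarith [dist_triangle y z x, mem_ball.1 hyz, mem_ball'.1 hxz]⟩

theorem tendsto_hausdorffDist_of_measure_le {X ι : Type*} [PseudoMetricSpace X]
    [MeasurableSpace X] [OpensMeasurableSpace X] {μ : Measure X} [μ.IsOpenPosMeasure]
    {l : Filter ι} {E : Set X} {A : ι → Set X} {δ : ι → ℝ}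
    (hEo : IsOpen E) (hEc : IsCompact (closure E))
    (hfin : ∃ R > 0, μ (cthickening R E) ≠ ∞) (hclos : μ (closure E) = μ E)
    (hδ : Tendsto δ l (𝓝 0)) (hA : ∀ i, μ E ≤ μ (A i)) (hAE : ∀ i, A i ⊆ cthickening (δ i) E) :
    Tendsto (fun i => hausdorffDist (A i) E) l (𝓝 0) := by
  have hF : Tendsto (fun i => μ (cthickening (δ i) E)) l (𝓝 (μ E)) :=
    hclos ▸ (tendsto_measure_cthickening hfin).comp hδ
  have hE : μ E ≠ ∞ := by
    obtain ⟨R, -, hR⟩ := hfin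
    exact ne_top_of_le_ne_top hR (measure_mono (self_subset_cthickening E))
  have hmeet : ∀ y ∈ closure E, ∀ r > 0, ∀ᶠ i in l, (A i ∩ ball y r).Nonempty := by
    intro y hy r hr
    have hV : IsOpen (E ∩ ball y r) := hEo.inter isOpen_ball
    have hV₀ : (E ∩ ball y r).Nonempty :=
      (mem_closure_iff.1 hy _ isOpen_ball (mem_ball_self hr)).mono fun _ h => ⟨h.2, h.1⟩
    refine (eventually_nonempty_inter_of_tendsto_measure hF hE hA hAE
      (fun i => inter_subset_left.trans (self_subset_cthickening E)) hV.measurableSet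
      (hV.measure_ne_zero μ hV₀)).mono fun i => Nonempty.mono ?_
    exact inter_subset_inter_right _ inter_subset_right
  refine tendsto_order.2 ⟨fun a ha => .of_forall fun i => ha.trans_le hausdorffDist_nonneg,
    fun ε hε => ?_⟩
  filter_upwards [hδ.eventually_lt_const (half_pos hε),
    hEc.eventually_forall_exists_dist_lt hmeet (half_pos hε)] with i hδi hnear
  refine (hausdorffDist_le_of_mem_dist (half_pos hε).le (fun x hx => ?_) fun y hy => ?_).trans_lt
    (half_lt_self hε)
  · obtain ⟨y, hy, hxy⟩ :=
      mem_thickening_iff.1 (cthickening_subset_thickening' (half_pos hε) hδi E (hAE i hx))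
    exact ⟨y, hy, hxy.le⟩
  · obtain ⟨x, hx, hyx⟩ := hnear y (subset_closure hy)
    exact ⟨x, hx, hyx.le⟩

abbrev torusBasis (N : ℕ) : Module.Basis (Fin N) ℝ (EuclideanSpace ℝ (Fin N)) :=
  (EuclideanSpace.basisFun (Fin N) ℝ).toBasis

lemma torusMeasure_apply {N : ℕ} {A : Set (Torus N)} (hA : MeasurableSet A) :
    torusMeasure N A = volume (torusQuot N ⁻¹' A ∩ ZSpan.fundamentalDomain (torusBasis N)) := by
  rw [torusMeasure, Measure.map_apply QuotientAddGroup.measurable_coe hA,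
    Measure.restrict_apply (QuotientAddGroup.measurable_coe hA)]
  -- the box `[0,1)^N` is the fundamental domain of the standard basis
  rfl

instance (N : ℕ) : Countable (torusLattice N) :=
  inferInstanceAs (Countable (Submodule.span ℤ (range (torusBasis N))))

instance (N : ℕ) : IsFiniteMeasure (torusMeasure N) where
  measure_univ_lt_top := by
    rw [torusMeasure_apply MeasurableSet.univ]
    exact measure_lt_top_of_subset inter_subset_right
      (ZSpan.fundamentalDomain_isBounded _).measure_lt_top.ne

lemma vadd_preimage_torusQuot {N : ℕ} (g : torusLattice N) (U : Set (Torus N)) :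
    g +ᵥ torusQuot N ⁻¹' U = torusQuot N ⁻¹' U := by
  ext x
  rw [mem_vadd_set_iff_neg_vadd_mem, mem_preimage, mem_preimage, AddSubgroup.vadd_def,
    vadd_eq_add, add_comm]
  exact iff_of_eq (congrArg (· ∈ U) (QuotientAddGroup.mk_add_of_mem x (-g).2))

instance (N : ℕ) : (torusMeasure N).IsOpenPosMeasure where
  open_pos U hU hne := by
    rw [torusMeasure_apply hU.measurableSet]
    have hP : IsOpen (torusQuot N ⁻¹' U) := hU.preimage continuous_quotient_mk'
    refine fun h => hP.measure_ne_zero volume (hne.preimage QuotientAddGroup.mk_surjective) ?_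
    exact (ZSpan.isAddFundamentalDomain' (torusBasis N) volume).measure_zero_of_invariant _
      (vadd_preimage_torusQuot · U) h

instance (N : ℕ) : CompactSpace (Torus N) where
  isCompact_univ := by
    refine ((ZSpan.fundamentalDomain_isBounded (torusBasis N)).isCompact_closure.image
      continuous_quotient_mk').of_isClosed_subset isClosed_univ fun q _ => ?_
    obtain ⟨x, rfl⟩ := QuotientAddGroup.mk_surjective q
    refine ⟨ZSpan.fract _ x, subset_closure (ZSpan.fract_mem_fundamentalDomain _ x), ?_⟩
    exact QuotientAddGroup.eq.2 ((ZSpan.fract_eq_fract _ _ _).1 (ZSpan.fract_fract _ x))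

theorem hausdorff_convergence_of_measure_and_thickening_general
    (N : ℕ) (E : Set (Torus N)) (m : ℝ)
    (hEopen : IsOpen E)
    (hμE : torusMeasure N E = ENNReal.ofReal m)
    (hμclos : torusMeasure N (closure E) = torusMeasure N E)
    (δ : ℕ → ℝ)
    (hδ : Filter.Tendsto δ Filter.atTop (nhds 0))
    (En : ℕ → Set (Torus N))
    (hμEn : ∀ n, torusMeasure N (En n) = ENNReal.ofReal m)
    (hsub : ∀ n, closure (En n) ⊆ Metric.cthickening (δ n) E) :
    Filter.Tendsto (fun n => Metric.hausdorffDist (closure (En n)) (closure E))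
      Filter.atTop (nhds 0) := by
  simp_rw [hausdorffDist_closure]
  exact tendsto_hausdorffDist_of_measure_le hEopen isClosed_closure.isCompact
    ⟨1, one_pos, measure_ne_top _ _⟩ hμclos hδ (fun n => ((hμEn n).trans hμE.symm).ge)
    fun n => subset_closure.trans (hsub n)

/-- Let `E ⊆ 𝕋^N` be a nonempty open set with `μ E = m > 0` and `μ (closure E) = μ E`.
If `δ n → 0`, `δ n > 0`, and `E n` are measurable sets with `μ (E n) = m` whose closures are
contained in the closed `δ n`-neighbourhood of `E`, then
`d_H (closure (E n), closure E) → 0`. -/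
theorem hausdorff_convergence_of_measure_and_thickening
    (N : ℕ) (E : Set (Torus N)) (m : ℝ)
    (hEopen : IsOpen E) (hEne : E.Nonempty) (hm : 0 < m)
    (hμE : torusMeasure N E = ENNReal.ofReal m)
    (hμclos : torusMeasure N (closure E) = torusMeasure N E)
    (δ : ℕ → ℝ) (hδpos : ∀ n, 0 < δ n)
    (hδ : Filter.Tendsto δ Filter.atTop (nhds 0))
    (En : ℕ → Set (Torus N)) (hEnmeas : ∀ n, MeasurableSet (En n))
    (hμEn : ∀ n, torusMeasure N (En n) = ENNReal.ofReal m)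
    (hsub : ∀ n, closure (En n) ⊆ Metric.cthickening (δ n) E) :
    Filter.Tendsto (fun n => Metric.hausdorffDist (closure (En n)) (closure E))
      Filter.atTop (nhds 0) :=
  hausdorff_convergence_of_measure_and_thickening_general N E m hEopen hμE hμclos δ hδ En hμEn hsub
end
end

section
/- Let N ≥ 2, let ν ∈ ℝ^N be a unit vector, let η ≥ 0, δ > 0 and p₀ ∈ ℝ^N. Let S ⊆ ℝ^N be a closed set with p₀ ∈ S such that S ∩ B̄(p₀, 4δ) ⊆ {y ∈ ℝ^N : ((y−p₀)·ν)² ≤ (η²/(1+η²)) |y−p₀|²}. Then for every t ∈ ℝ with |t| ≤ 2δ one has |t|/√(1+η²) ≤ dist(p₀ + tν, S) ≤ |t|. -/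
/-!
Write `y - p₀ = v`. Along the normal line, `‖t • ν - v‖² = t² - 2 t ⟪v, ν⟫ + ‖v‖²`, and the cone
condition `⟪v, ν⟫² ≤ a ‖v‖²` with `a = η² / (1 + η²)` bounds this below by
`(‖v‖ - √a |t|)² + (1 - a) t² ≥ t² / (1 + η²)`. Points of `S` outside `B̄(p₀, 4δ)` are even
farther than `|t| ≤ 2δ` from `p₀ + t • ν`, and `p₀ ∈ S` itself is at distance exactly `|t|`.
-/

open Metric

section InnerProductSpace

variable {E : Type*} [NormedAddCommGroup E] [InnerProductSpace ℝ E]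

theorem one_sub_mul_sq_le_norm_smul_sub_sq {u v : E} (hu : ‖u‖ = 1) {a : ℝ} (ha : 0 ≤ a)
    (hv : inner ℝ v u ^ 2 ≤ a * ‖v‖ ^ 2) (t : ℝ) :
    (1 - a) * t ^ 2 ≤ ‖t • u - v‖ ^ 2 := by
  have hexpand : ‖t • u - v‖ ^ 2 = t ^ 2 - 2 * t * inner ℝ v u + ‖v‖ ^ 2 := by
    rw [norm_sub_sq_real, norm_smul, hu, real_inner_smul_left, real_inner_comm,
      Real.norm_eq_abs, mul_one, sq_abs]
    ring
  have hcross : 2 * t * inner ℝ v u ≤ a * t ^ 2 + ‖v‖ ^ 2 := by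
    nlinarith [sq_nonneg (a * t ^ 2 - ‖v‖ ^ 2), sq_nonneg (t * inner ℝ v u),
      mul_le_mul_of_nonneg_left hv (sq_nonneg (2 * t)), mul_nonneg ha (sq_nonneg t)]
  rw [hexpand]
  linarith

theorem abs_div_sqrt_le_dist_of_mem_cone {ν p₀ y : E} (hν : ‖ν‖ = 1) {η : ℝ}
    (hy : inner ℝ (y - p₀) ν ^ 2 ≤ η ^ 2 / (1 + η ^ 2) * ‖y - p₀‖ ^ 2) (t : ℝ) :
    |t| / √(1 + η ^ 2) ≤ dist (p₀ + t • ν) y := by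
  have hpos : 0 < 1 + η ^ 2 := by positivity
  have hsq := one_sub_mul_sq_le_norm_smul_sub_sq hν (by positivity) hy t
  have hlhs : (|t| / √(1 + η ^ 2)) ^ 2 = (1 - η ^ 2 / (1 + η ^ 2)) * t ^ 2 := by
    rw [div_pow, sq_abs, Real.sq_sqrt hpos.le]
    field_simp
    ring
  rw [← pow_le_pow_iff_left₀ (by positivity) dist_nonneg two_ne_zero, hlhs, dist_eq_norm]
  rwa [show p₀ + t • ν - y = t • ν - (y - p₀) by abel]

theorem dist_add_smul_left {p u : E} (hu : ‖u‖ = 1) (t : ℝ) : dist (p + t • u) p = |t| := by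
  rw [dist_self_add_left, norm_smul, hu, Real.norm_eq_abs, mul_one]

theorem abs_le_dist_of_dist_gt {ν p₀ y : E} (hν : ‖ν‖ = 1) {t δ : ℝ} (ht : |t| ≤ 2 * δ)
    (hy : 4 * δ < dist y p₀) :
    |t| ≤ dist (p₀ + t • ν) y := by
  have := dist_triangle_left y p₀ (p₀ + t • ν)
  rw [dist_add_smul_left hν] at this
  linarith

end InnerProductSpace

theorem infDist_along_normal_bounds_general (N : ℕ)
    (ν : EuclideanSpace ℝ (Fin N)) (hν : ‖ν‖ = 1) (η δ : ℝ)
    (p₀ : EuclideanSpace ℝ (Fin N)) (S : Set (EuclideanSpace ℝ (Fin N)))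
    (hp₀ : p₀ ∈ S)
    (hsub : S ∩ Metric.closedBall p₀ (4 * δ) ⊆
      {y : EuclideanSpace ℝ (Fin N) |
        (inner ℝ (y - p₀) ν : ℝ) ^ 2 ≤ (η ^ 2 / (1 + η ^ 2)) * ‖y - p₀‖ ^ 2})
    (t : ℝ) (ht : |t| ≤ 2 * δ) :
    |t| / Real.sqrt (1 + η ^ 2) ≤ Metric.infDist (p₀ + t • ν) S ∧
      Metric.infDist (p₀ + t • ν) S ≤ |t| := by
  refine ⟨(le_infDist ⟨p₀, hp₀⟩).2 fun y hy => ?_, ?_⟩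
  · by_cases hnear : dist y p₀ ≤ 4 * δ
    · exact abs_div_sqrt_le_dist_of_mem_cone hν (hsub ⟨hy, hnear⟩) t
    · have hsqrt : 1 ≤ √(1 + η ^ 2) := Real.one_le_sqrt.2 (by nlinarith)
      exact (div_le_self (abs_nonneg t) hsqrt).trans
        (abs_le_dist_of_dist_gt hν ht (not_le.1 hnear))
  · exact (infDist_le_dist_of_mem hp₀).trans_eq (dist_add_smul_left hν t)

/-- Let `ν` be a unit vector in `ℝ^N` (`N ≥ 2`), `η ≥ 0`, `δ > 0`, and let `S` be a closed set
containing `p₀` such that inside the closed ball `B̄(p₀, 4δ)` the set `S` is contained in the cone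
`{y : ((y - p₀) ⬝ ν)² ≤ η²/(1+η²) ‖y - p₀‖²}`. Then for every `t` with `|t| ≤ 2δ`,
`|t|/√(1+η²) ≤ dist (p₀ + t ν, S) ≤ |t|`. -/
theorem infDist_along_normal_bounds (N : ℕ) (hN : 2 ≤ N)
    (ν : EuclideanSpace ℝ (Fin N)) (hν : ‖ν‖ = 1) (η δ : ℝ) (hη : 0 ≤ η) (hδ : 0 < δ)
    (p₀ : EuclideanSpace ℝ (Fin N)) (S : Set (EuclideanSpace ℝ (Fin N)))
    (hS : IsClosed S) (hp₀ : p₀ ∈ S)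
    (hsub : S ∩ Metric.closedBall p₀ (4 * δ) ⊆
      {y : EuclideanSpace ℝ (Fin N) |
        (inner ℝ (y - p₀) ν : ℝ) ^ 2 ≤ (η ^ 2 / (1 + η ^ 2)) * ‖y - p₀‖ ^ 2})
    (t : ℝ) (ht : |t| ≤ 2 * δ) :
    |t| / Real.sqrt (1 + η ^ 2) ≤ Metric.infDist (p₀ + t • ν) S ∧
      Metric.infDist (p₀ + t • ν) S ≤ |t| :=
  infDist_along_normal_bounds_general N ν hν η δ p₀ S hp₀ hsub t ht
end

section
/- Let q : ℝ² → 𝕋² be the quotient map onto the flat two-dimensional torus, and let (p,k) ∈ ℤ² be a nonzero integer vector with gcd(|p|,|k|) = 1. Then the image q({t·(p,k) : t ∈ ℝ}) of the line through the origin with direction (p,k) is a closed subset of 𝕋², and its one-dimensional Hausdorff measure equals √(p² + k²). -/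
open MeasureTheory

noncomputable section

/-!
With `v = (p, k)`, the curve `γ t = q (t • v)` is `1`-periodic because `v ∈ ℤ²`, and it is
injective on half-open intervals of length `1` because `gcd (p, k) = 1`: by Bézout, `t • v ∈ ℤ²`
forces `t ∈ ℤ`. So the image of the line is `γ '' [0, 1]`, which is compact, and also the injective
image `γ '' (0, 1]`. Nonzero lattice vectors have norm at least `1`, so `q` is an isometry on sets
of diameter at most `1/2`; cutting `(0, 1]` into `n > 2‖v‖` equal pieces, each piece has
Hausdorff measure `‖v‖ / n`.
-/

open Set Function

theorem QuotientAddGroup.dist_mk_eq_of_two_mul_dist_le {E : Type*} [SeminormedAddCommGroup E]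
    {S : AddSubgroup E} {δ : ℝ} (hS : ∀ z ∈ S, z ≠ 0 → δ ≤ ‖z‖) {x y : E}
    (h : 2 * dist x y ≤ δ) : dist (x : E ⧸ S) (y : E ⧸ S) = dist x y := by
  rw [dist_eq_norm, ← QuotientAddGroup.mk_sub, QuotientAddGroup.norm_mk, dist_eq_norm]
  refine le_antisymm ?_ ?_
  · simpa using Metric.infDist_le_dist_of_mem (zero_mem S) (x := x - y)
  · have : Nonempty S := ⟨0⟩
    rw [Metric.infDist_eq_iInf]
    refine le_ciInf fun ⟨z, hz⟩ => ?_
    rcases eq_or_ne z 0 with rfl | hz0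
    · simp
    · rw [dist_eq_norm] at h ⊢
      linarith [hS z hz hz0, norm_sub_norm_le z (x - y), norm_sub_rev (x - y) z]

theorem mem_torusLattice_iff {N : ℕ} {w : EuclideanSpace ℝ (Fin N)} :
    w ∈ torusLattice N ↔ ∀ i, ∃ m : ℤ, w i = m := by
  rw [Submodule.mem_toAddSubgroup, Module.Basis.mem_span_iff_repr_mem]
  simp only [OrthonormalBasis.coe_toBasis_repr_apply, EuclideanSpace.basisFun_repr,
    Set.mem_range, algebraMap_int_eq, Int.coe_castRingHom, eq_comm]

theorem one_le_norm_of_mem_torusLattice {N : ℕ} {z : EuclideanSpace ℝ (Fin N)}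
    (hz : z ∈ torusLattice N) (h0 : z ≠ 0) : 1 ≤ ‖z‖ := by
  obtain ⟨i, hi⟩ : ∃ i, z i ≠ 0 := by
    by_contra! h
    exact h0 (by ext i; simp [h i])
  obtain ⟨m, hm⟩ := mem_torusLattice_iff.mp hz i
  have hm0 : m ≠ 0 := by rintro rfl; simp [hm] at hi
  calc (1 : ℝ) ≤ |(m : ℝ)| := by exact_mod_cast Int.one_le_abs hm0
    _ = ‖z i‖ := by rw [hm, Real.norm_eq_abs]
    _ ≤ ‖z‖ := PiLp.norm_apply_le z i

theorem dist_torusQuot {N : ℕ} {x y : EuclideanSpace ℝ (Fin N)} (h : 2 * dist x y ≤ 1) :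
    dist (torusQuot N x) (torusQuot N y) = dist x y :=
  QuotientAddGroup.dist_mk_eq_of_two_mul_dist_le
    (fun _ hz hz0 => one_le_norm_of_mem_torusLattice hz hz0) h

theorem hausdorffMeasure_image_of_dist_eq {X Y : Type*} [MetricSpace X] [MetricSpace Y]
    [MeasurableSpace X] [BorelSpace X] [MeasurableSpace Y] [BorelSpace Y] {f : X → Y}
    {s : Set X} (hf : ∀ x ∈ s, ∀ y ∈ s, dist (f x) (f y) = dist x y) {d : ℝ} (hd : 0 ≤ d) :
    μH[d] (f '' s) = μH[d] s := by
  have hiso : Isometry (s.domRestrict f) :=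
    Isometry.of_dist_eq fun x y => hf x x.2 y y.2
  calc μH[d] (f '' s) = μH[d] (s.domRestrict f '' univ) := by rw [image_univ, range_domRestrict]
    _ = μH[d] (Subtype.val '' (univ : Set s)) := by
      rw [hiso.hausdorffMeasure_image (Or.inl hd),
        isometry_subtype_coe.hausdorffMeasure_image (Or.inl hd)]
    _ = μH[d] s := by rw [image_univ, Subtype.range_coe]

def torusLine {N : ℕ} (v : EuclideanSpace ℝ (Fin N)) (t : ℝ) : Torus N := torusQuot N (t • v)

section TorusLine

variable {N : ℕ} (v : EuclideanSpace ℝ (Fin N))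

theorem torusQuot_image_range_smul :
    torusQuot N '' range (fun t : ℝ => t • v) = range (torusLine v) :=
  (range_comp _ _).symm

theorem continuous_torusLine : Continuous (torusLine v) :=
  continuous_quot_mk.comp (continuous_id.smul continuous_const)

theorem periodic_torusLine (hv : v ∈ torusLattice N) : Periodic (torusLine v) 1 := by
  intro t
  refine QuotientAddGroup.eq_iff_sub_mem.mpr ?_
  simpa [add_smul] using hv

theorem hausdorffMeasure_torusLine_image_Ioc_add {a h : ℝ} (hshort : 2 * (h * ‖v‖) ≤ 1) :
    μH[1] (torusLine v '' Ioc a (a + h)) = ENNReal.ofReal (h * ‖v‖) := by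
  have hdist : ∀ x ∈ (· • v) '' Ioc a (a + h), ∀ y ∈ (· • v) '' Ioc a (a + h),
      dist (torusQuot N x) (torusQuot N y) = dist x y := by
    rintro _ ⟨t, ht, rfl⟩ _ ⟨s, hs, rfl⟩
    refine dist_torusQuot (le_trans ?_ hshort)
    rw [dist_eq_norm, ← sub_smul, norm_smul, Real.norm_eq_abs]
    gcongr
    simpa using abs_sub_le_of_le_of_le ht.1.le ht.2 hs.1.le hs.2
  rw [show torusLine v = torusQuot N ∘ (· • v) from rfl, image_comp,
    hausdorffMeasure_image_of_dist_eq hdist zero_le_one, hausdorffMeasure_smul_right_image,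
    hausdorffMeasure_real, Real.volume_Ioc, add_sub_cancel_left, ENNReal.smul_def, smul_eq_mul,
    ← ENNReal.ofReal_coe_nnreal, coe_nnnorm, ← ENNReal.ofReal_mul (norm_nonneg v), mul_comm]

theorem hausdorffMeasure_torusLine_image_Ioc {a b : ℝ} (hab : a ≤ b)
    (hinj : InjOn (torusLine v) (Ioc a b)) :
    μH[1] (torusLine v '' Ioc a b) = ENNReal.ofReal ((b - a) * ‖v‖) := by
  obtain ⟨n, hn⟩ := exists_nat_gt (2 * ((b - a) * ‖v‖))
  have hn0 : (0 : ℝ) < n := lt_of_le_of_lt (by positivity) hn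
  set h := (b - a) / n with h_def
  have hnh : n * h = b - a := by rw [h_def]; field_simp
  have hh : 0 ≤ h := by positivity
  have hshort : 2 * (h * ‖v‖) ≤ 1 := by
    rw [← hnh] at hn
    exact (lt_of_mul_lt_mul_left (by linarith : n * (2 * (h * ‖v‖)) < n * 1) hn0.le).le
  suffices hsplit : ∀ m ≤ n,
      μH[1] (torusLine v '' Ioc a (a + m * h)) = ENNReal.ofReal (m * h * ‖v‖) by
    simpa [hnh] using hsplit n le_rfl
  intro m hm
  induction m with
  | zero => simp
  | succ m ih =>
    have hmn : (m + 1 : ℝ) ≤ n := by exact_mod_cast hm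
    have hunion : Ioc a (a + (m + 1 : ℕ) * h) =
        Ioc a (a + m * h) ∪ Ioc (a + m * h) (a + m * h + h) := by
      rw [Ioc_union_Ioc_eq_Ioc (by nlinarith) (by linarith)]; push_cast; ring_nf
    have hsub : Ioc a (a + (m + 1 : ℕ) * h) ⊆ Ioc a b :=
      Ioc_subset_Ioc_right (by push_cast; nlinarith)
    obtain ⟨hsub_left, hsub_right⟩ := union_subset_iff.mp (hunion ▸ hsub)
    have hmeas : MeasurableSet (torusLine v '' Ioc (a + m * h) (a + m * h + h)) :=
      measurableSet_Ioc.image_of_continuousOn_injOn (continuous_torusLine v).continuousOn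
        (hinj.mono hsub_right)
    rw [hunion, image_union,
      measure_union ((Ioc_disjoint_Ioc_of_le le_rfl).image hinj hsub_left hsub_right) hmeas,
      ih (by omega), hausdorffMeasure_torusLine_image_Ioc_add v hshort,
      ← ENNReal.ofReal_add (mul_nonneg (mul_nonneg m.cast_nonneg hh) (norm_nonneg v))
        (mul_nonneg hh (norm_nonneg v))]
    push_cast; ring_nf

end TorusLine

theorem mem_torusLattice_intVec (p k : ℤ) : !₂[(p : ℝ), k] ∈ torusLattice 2 :=
  mem_torusLattice_iff.mpr fun i => by fin_cases i; exacts [⟨p, rfl⟩, ⟨k, rfl⟩]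

theorem norm_intVec (p k : ℤ) : ‖!₂[(p : ℝ), k]‖ = √((p : ℝ) ^ 2 + (k : ℝ) ^ 2) := by
  simp [EuclideanSpace.norm_eq, Fin.sum_univ_two]

theorem exists_int_eq_of_smul_intVec_mem_torusLattice {p k : ℤ} (hgcd : Int.gcd p k = 1) {r : ℝ}
    (h : r • !₂[(p : ℝ), k] ∈ torusLattice 2) : ∃ m : ℤ, r = m := by
  obtain ⟨m₁, hm₁⟩ := mem_torusLattice_iff.mp h 0
  obtain ⟨m₂, hm₂⟩ := mem_torusLattice_iff.mp h 1
  have hbezout : ((p * p.gcdA k + k * p.gcdB k : ℤ) : ℝ) = 1 := by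
    rw [← Int.gcd_eq_gcd_ab, hgcd, Nat.cast_one, Int.cast_one]
  refine ⟨m₁ * p.gcdA k + m₂ * p.gcdB k, ?_⟩
  simp only [PiLp.smul_apply, Matrix.cons_val_zero, Matrix.cons_val_one, smul_eq_mul,
    Int.cast_add, Int.cast_mul] at hm₁ hm₂ hbezout
  push_cast
  linear_combination (p.gcdA k : ℝ) * hm₁ + (p.gcdB k : ℝ) * hm₂ - r * hbezout

theorem injOn_torusLine_intVec {p k : ℤ} (hgcd : Int.gcd p k = 1) {a b : ℝ} (hab : b ≤ a + 1) :
    InjOn (torusLine !₂[(p : ℝ), k]) (Ioc a b) := by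
  intro t ht s hs hts
  rw [torusLine, torusLine, QuotientAddGroup.eq_iff_sub_mem, ← sub_smul] at hts
  obtain ⟨m, hm⟩ := exists_int_eq_of_smul_intVec_mem_torusLattice hgcd hts
  have hm0 : m = 0 := by
    rw [← Int.abs_lt_one_iff, ← Int.cast_lt (R := ℝ), Int.cast_abs, Int.cast_one, ← hm]
    exact abs_sub_lt_iff.mpr ⟨by linarith [ht.2, hs.1], by linarith [ht.1, hs.2]⟩
  rwa [hm0, Int.cast_zero, sub_eq_zero] at hm

theorem image_rational_line_closed_and_length_general
    (p k : ℤ) (hgcd : Int.gcd p k = 1)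
    (v : EuclideanSpace ℝ (Fin 2))
    (hv : v = (WithLp.equiv 2 (Fin 2 → ℝ)).symm ![(p : ℝ), (k : ℝ)])
    (L : Set (EuclideanSpace ℝ (Fin 2))) (hL : L = Set.range fun t : ℝ => t • v) :
    IsClosed (torusQuot 2 '' L) ∧
      μH[1] (torusQuot 2 '' L) = ENNReal.ofReal (Real.sqrt ((p : ℝ) ^ 2 + (k : ℝ) ^ 2)) := by
  subst hL
  obtain rfl : v = !₂[(p : ℝ), k] := hv
  have hper : Periodic (torusLine !₂[(p : ℝ), k]) 1 :=
    periodic_torusLine _ (mem_torusLattice_intVec p k)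
  rw [torusQuot_image_range_smul]
  refine ⟨?_, ?_⟩
  · rw [← hper.image_Icc one_pos 0]
    exact (isCompact_Icc.image (continuous_torusLine _)).isClosed
  · rw [← hper.image_Ioc one_pos 0, zero_add, hausdorffMeasure_torusLine_image_Ioc _ zero_le_one
      (injOn_torusLine_intVec hgcd (zero_add 1).ge), norm_intVec, sub_zero, one_mul]

/-- Let `(p, k) ∈ ℤ²` be nonzero with `gcd (|p|, |k|) = 1`. Then the image in the flat torus
`𝕋²` of the line through the origin with direction `(p, k)` is closed, and its one-dimensional
Hausdorff measure equals `√(p² + k²)`. -/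
theorem image_rational_line_closed_and_length
    (p k : ℤ) (hpk : (p, k) ≠ (0, 0)) (hgcd : Int.gcd p k = 1)
    (v : EuclideanSpace ℝ (Fin 2))
    (hv : v = (WithLp.equiv 2 (Fin 2 → ℝ)).symm ![(p : ℝ), (k : ℝ)])
    (L : Set (EuclideanSpace ℝ (Fin 2))) (hL : L = Set.range fun t : ℝ => t • v) :
    IsClosed (torusQuot 2 '' L) ∧
      μH[1] (torusQuot 2 '' L) = ENNReal.ofReal (Real.sqrt ((p : ℝ) ^ 2 + (k : ℝ) ^ 2)) :=
  image_rational_line_closed_and_length_general p k hgcd v hv L hL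
end
end
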